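/- Let (X,d) and (Λ,ρ) be compact metric spaces, ω : Λ × X → X continuous, p a Borel probability measure on Λ with p(U) > 0 for every nonempty open U ⊆ Λ, and suppose ω is ℙ-weakly hyperbolic for ℙ = p^ℕ. Let μ_p be the unique fixed point of the transfer operator T_p and Γ : S → X the coding map. Then supp(μ_p) = closure(Γ(S)). -/

import Mathlib

/-!
A fixed point `μ` of `T_p` satisfies `μ B = ∫ μ ((ω_{σ 0} ∘ ⋯ ∘ ω_{σ (n-1)})⁻¹' B) dℙ(σ)` for
every `n`: peel off the first map, using that under the Bernoulli measure `ℙ` the first letter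
and the tail are independent with laws `p` and `ℙ`. For `σ ∈ S` the image of `X` under the
`n`-fold composition shrinks to `Γ σ`. A ball away from `Γ(S)` therefore has preimages that are
eventually empty for `ℙ`-almost every `σ`, and dominated convergence gives it measure zero.
Conversely, a neighbourhood `U` of `Γ σ` contains that image for some `n`, and then also for
every `τ` in an open cylinder around `σ`; since `p` has full support this cylinder has positive
`ℙ`-measure, hence so has `U`.
-/

open Metric Set Filter MeasureTheory

def hcomp {Λ X : Type*} (ω : Λ → X → X) (σ : ℕ → Λ) : ℕ → X → X
  | 0 => id
  | n + 1 => hcomp ω σ n ∘ ω (σ n)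

def IsBernoulli {Λ : Type*} [MeasurableSpace Λ]
    (p : Measure Λ) (P : Measure (ℕ → Λ)) : Prop :=
  IsProbabilityMeasure P ∧
    ∀ (n : ℕ) (A : ℕ → Set Λ), (∀ i, MeasurableSet (A i)) →
      P {σ | ∀ i < n, σ i ∈ A i} = ∏ i ∈ Finset.range n, p (A i)

def Sset {Λ X : Type*} [MetricSpace X] (ω : Λ → X → X) : Set (ℕ → Λ) :=
  {σ | Tendsto (fun n => Metric.diam (Set.range (hcomp ω σ n))) atTop (nhds 0)}

/-- The transfer (Markov) operator `T_p`, defined on probability measures by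
`T_p(μ)(B) = ∫_Λ μ(ω_λ⁻¹(B)) dp(λ)`, i.e. as the pushforward of `p × μ` under `ω`. -/
noncomputable def transferOp {X Λ : Type*}
    [MetricSpace X] [CompactSpace X] [MeasurableSpace X] [BorelSpace X]
    [MetricSpace Λ] [CompactSpace Λ] [MeasurableSpace Λ] [BorelSpace Λ]
    (ω : Λ → X → X) (hω : Continuous fun q : Λ × X => ω q.1 q.2)
    (p : Measure Λ) [IsProbabilityMeasure p]
    (μ : ProbabilityMeasure X) : ProbabilityMeasure X :=
  ⟨(p.prod μ.toMeasure).map (fun q : Λ × X => ω q.1 q.2), by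
    have : IsProbabilityMeasure (p.prod μ.toMeasure) := by
      have := μ.2; infer_instance
    exact Measure.isProbabilityMeasure_map hω.measurable.aemeasurable⟩

/-- The (closed) support of a measure: the set of points all of whose open
neighbourhoods have positive measure. -/
def msupport {X : Type*} [TopologicalSpace X] [MeasurableSpace X]
    (μ : Measure X) : Set X :=
  {x | ∀ U : Set X, IsOpen U → x ∈ U → μ U ≠ 0}

open Topology ENNReal

section Bernoulli

variable {Λ : Type*} [MeasurableSpace Λ] {p : Measure Λ} {P : Measure (ℕ → Λ)}

def seqCons (q : Λ × (ℕ → Λ)) : ℕ → Λ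
  | 0 => q.1
  | n + 1 => q.2 n

lemma measurable_seqCons : Measurable (seqCons : Λ × (ℕ → Λ) → ℕ → Λ) := by
  refine measurable_pi_lambda _ fun n => ?_
  cases n with
  | zero => exact measurable_fst
  | succ n => exact (measurable_pi_apply n).comp measurable_snd

lemma measurable_head_tail : Measurable fun σ : ℕ → Λ => (σ 0, fun i => σ (i + 1)) := by
  fun_prop

lemma measurableSet_setOf_forall_lt {n : ℕ} {A : ℕ → Set Λ} (hA : ∀ i, MeasurableSet (A i)) :
    MeasurableSet {σ : ℕ → Λ | ∀ i < n, σ i ∈ A i} :=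
  MeasurableSet.pi (to_countable (Iio n)) fun i _ => hA i

theorem IsBernoulli.eq_infinitePi [IsProbabilityMeasure p] (hP : IsBernoulli p P) :
    P = Measure.infinitePi fun _ => p := by
  classical
  refine Measure.eq_infinitePi _ fun s t ht => ?_
  set N := s.sup id + 1
  have hsN : s ⊆ Finset.range N := fun i hi =>
    Finset.mem_range.2 (Nat.lt_succ_of_le (Finset.le_sup (f := id) hi))
  set A : ℕ → Set Λ := fun i => if i ∈ s then t i else Set.univ
  have hbox : Set.pi s t = {σ : ℕ → Λ | ∀ i < N, σ i ∈ A i} := by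
    ext σ
    refine ⟨fun h i _ => ?_, fun h i hi => ?_⟩
    · by_cases hi : i ∈ s <;> simp [A, hi, h i]
    · simpa [A, Finset.mem_coe.1 hi] using h i (Finset.mem_range.1 (hsN hi))
  rw [hbox, hP.2 N A fun i => by by_cases hi : i ∈ s <;> simp [A, hi, ht i]]
  refine (Finset.prod_subset hsN fun i _ hi => by simp [A, hi]).symm.trans ?_
  exact Finset.prod_congr rfl fun i hi => by simp [A, hi]

theorem IsBernoulli.isBernoulli_map_seqCons [IsProbabilityMeasure p] (hP : IsBernoulli p P) :
    IsBernoulli p ((p.prod P).map seqCons) := by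
  have := hP.1
  refine ⟨Measure.isProbabilityMeasure_map measurable_seqCons.aemeasurable, fun n A hA => ?_⟩
  rw [Measure.map_apply measurable_seqCons (measurableSet_setOf_forall_lt hA)]
  cases n with
  | zero => simp
  | succ n =>
    have : seqCons ⁻¹' {σ | ∀ i < n + 1, σ i ∈ A i}
        = A 0 ×ˢ {τ : ℕ → Λ | ∀ i < n, τ i ∈ A (i + 1)} := by
      ext ⟨a, τ⟩
      simp only [mem_preimage, mem_prod, mem_ofPred_eq, Nat.forall_lt_succ_left]
      rfl
    rw [this, Measure.prod_prod, hP.2 n _ fun i => hA (i + 1), Finset.prod_range_succ']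
    ring

theorem IsBernoulli.map_head_tail [IsProbabilityMeasure p] (hP : IsBernoulli p P) :
    P.map (fun σ => (σ 0, fun i => σ (i + 1))) = p.prod P := by
  conv_lhs => rw [← hP.isBernoulli_map_seqCons.eq_infinitePi.trans hP.eq_infinitePi.symm]
  rw [Measure.map_map measurable_head_tail measurable_seqCons]
  exact Measure.map_id

end Bernoulli

section Composition

variable {Λ X : Type*} {ω : Λ → X → X}

lemma hcomp_succ' (σ : ℕ → Λ) (n : ℕ) :
    hcomp ω σ (n + 1) = ω (σ 0) ∘ hcomp ω (fun i => σ (i + 1)) n := by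
  induction n with
  | zero => rfl
  | succ n ih => rw [hcomp, ih]; rfl

lemma measurable_hcomp [MeasurableSpace Λ] [MeasurableSpace X]
    (hω : Measurable fun q : Λ × X => ω q.1 q.2) (n : ℕ) :
    Measurable fun q : (ℕ → Λ) × X => hcomp ω q.1 n q.2 := by
  induction n with
  | zero => exact measurable_snd
  | succ n ih =>
    exact ih.comp (measurable_fst.prodMk
      (hω.comp (((measurable_pi_apply n).comp measurable_fst).prodMk measurable_snd)))

lemma continuous_hcomp [TopologicalSpace Λ] [TopologicalSpace X]
    (hω : Continuous fun q : Λ × X => ω q.1 q.2) (n : ℕ) :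
    Continuous fun q : (ℕ → Λ) × X => hcomp ω q.1 n q.2 := by
  induction n with
  | zero => exact continuous_snd
  | succ n ih =>
    exact ih.comp (continuous_fst.prodMk
      (hω.comp (((continuous_apply n).comp continuous_fst).prodMk continuous_snd)))

end Composition

section Stationary

variable {Λ X : Type*} [MeasurableSpace Λ] [MeasurableSpace X]

def IsStationaryMeasure (ω : Λ → X → X) (p : Measure Λ) (μ : Measure X) : Prop :=
  ∀ B, MeasurableSet B → ∫⁻ l, μ (ω l ⁻¹' B) ∂p = μ B

variable {ω : Λ → X → X} {p : Measure Λ} [IsProbabilityMeasure p] {P : Measure (ℕ → Λ)}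
  {μ : Measure X}

theorem IsBernoulli.lintegral_measure_preimage_hcomp (hP : IsBernoulli p P)
    (hω : Measurable fun q : Λ × X => ω q.1 q.2) [SFinite μ] (hμ : IsStationaryMeasure ω p μ)
    (n : ℕ) {B : Set X} (hB : MeasurableSet B) : ∫⁻ σ, μ (hcomp ω σ n ⁻¹' B) ∂P = μ B := by
  have := hP.1
  induction n generalizing B with
  | zero => simp [hcomp]
  | succ n ih =>
    have hF : Measurable fun q : Λ × (ℕ → Λ) => μ (hcomp ω q.2 n ⁻¹' (ω q.1 ⁻¹' B)) :=
      measurable_measure_prodMk_left <| (hB.preimage hω).preimage <|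
        (measurable_fst.comp measurable_fst).prodMk
          ((measurable_hcomp hω n).comp
            ((measurable_snd.comp measurable_fst).prodMk measurable_snd))
    calc ∫⁻ σ, μ (hcomp ω σ (n + 1) ⁻¹' B) ∂P
        = ∫⁻ q, μ (hcomp ω q.2 n ⁻¹' (ω q.1 ⁻¹' B))
            ∂(P.map fun σ => (σ 0, fun i => σ (i + 1))) := by
          rw [lintegral_map hF measurable_head_tail]
          simp only [hcomp_succ', preimage_comp]
      _ = ∫⁻ l, ∫⁻ τ, μ (hcomp ω τ n ⁻¹' (ω l ⁻¹' B)) ∂P ∂p := by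
          rw [hP.map_head_tail, lintegral_prod _ hF.aemeasurable]
      _ = μ B := by
          rw [← hμ B hB]
          exact lintegral_congr fun l => ih (hB.preimage (hω.comp measurable_prodMk_left))

theorem IsBernoulli.measure_eq_zero_of_eventually_preimage_hcomp_eq_empty (hP : IsBernoulli p P)
    (hω : Measurable fun q : Λ × X => ω q.1 q.2) [IsFiniteMeasure μ]
    (hμ : IsStationaryMeasure ω p μ) {S : Set (ℕ → Λ)} (hS : P S = 1)
    {B : Set X} (hB : MeasurableSet B) (hSB : ∀ σ ∈ S, ∀ᶠ n in atTop, hcomp ω σ n ⁻¹' B = ∅) :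
    μ B = 0 := by
  have := hP.1
  set F : ℕ → (ℕ → Λ) → ℝ≥0∞ := fun n σ => μ (hcomp ω σ n ⁻¹' B)
  have hF : ∀ n, Measurable (F n) := fun n =>
    measurable_measure_prodMk_left (hB.preimage (measurable_hcomp hω n))
  have hT := measurableSet_tendsto (l := atTop) (𝓝 0) hF
  have hST : S ⊆ {σ | Tendsto (fun n => F n σ) atTop (𝓝 0)} := fun σ hσ =>
    tendsto_const_nhds.congr' <| (hSB σ hσ).mono fun n hn => by simp [F, hn]
  have hlim : ∀ᵐ σ ∂P, Tendsto (fun n => F n σ) atTop (𝓝 0) :=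
    ae_iff.2 <| (prob_compl_eq_zero_iff hT).2 <| le_antisymm prob_le_one (hS ▸ measure_mono hST)
  have hconv := tendsto_lintegral_of_dominated_convergence (fun _ => μ univ) hF
    (fun n => ae_of_all _ fun σ => measure_mono (subset_univ _)) (by simp) hlim
  simp only [F, hP.lintegral_measure_preimage_hcomp hω hμ _ hB, lintegral_zero] at hconv
  exact tendsto_nhds_unique tendsto_const_nhds hconv

end Stationary

lemma isClosed_msupport {X : Type*} [TopologicalSpace X] [MeasurableSpace X] (μ : Measure X) :
    IsClosed (msupport μ) := by
  refine isOpen_compl_iff.1 (isOpen_iff_forall_mem_open.2 fun x hx => ?_)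
  simp only [msupport, mem_compl_iff, mem_ofPred_eq, not_forall, not_not] at hx
  obtain ⟨U, hU, hxU, hμU⟩ := hx
  exact ⟨U, fun y hy hyμ => hyμ U hU hy hμU, hU, hxU⟩

section Support

variable {Λ : Type*} [TopologicalSpace Λ] [MeasurableSpace Λ] {p : Measure Λ}
  [IsProbabilityMeasure p] {P : Measure (ℕ → Λ)}

theorem IsBernoulli.measure_pos_of_isOpen [OpensMeasurableSpace Λ] (hP : IsBernoulli p P)
    (hp : ∀ U : Set Λ, IsOpen U → U.Nonempty → 0 < p U) {s : Set (ℕ → Λ)} (hs : IsOpen s)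
    (hne : s.Nonempty) : 0 < P s := by
  obtain ⟨σ, hσ⟩ := hne
  obtain ⟨I, t, ht, hIt⟩ := isOpen_pi_iff.1 hs σ hσ
  calc 0 < ∏ i ∈ I, p (t i) :=
        CanonicallyOrderedAdd.prod_pos.2 fun i hi => hp _ (ht i hi).1 ⟨σ i, (ht i hi).2⟩
    _ = P (Set.pi I t) := by
        rw [hP.eq_infinitePi, Measure.infinitePi_pi _ fun i hi => (ht i hi).1.measurableSet]
    _ ≤ P s := measure_mono hIt

variable {X : Type*} [TopologicalSpace X] [CompactSpace X] [MeasurableSpace X]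
  [BorelSpace X] {ω : Λ → X → X} {μ : Measure X}

theorem IsBernoulli.measure_pos_of_range_hcomp_subset [SecondCountableTopology Λ]
    [OpensMeasurableSpace Λ] (hP : IsBernoulli p P)
    (hp : ∀ U : Set Λ, IsOpen U → U.Nonempty → 0 < p U)
    (hω : Continuous fun q : Λ × X => ω q.1 q.2) [IsProbabilityMeasure μ]
    (hμ : IsStationaryMeasure ω p μ) {U : Set X} (hU : IsOpen U)
    {σ : ℕ → Λ} {n : ℕ} (hσ : range (hcomp ω σ n) ⊆ U) : 0 < μ U := by
  set C := {τ : ℕ → Λ | MapsTo (hcomp ω τ n) univ U}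
  have hC : IsOpen C :=
    (ContinuousMap.isOpen_setOfPred_mapsTo isCompact_univ hU).preimage
      (ContinuousMap.curry ⟨_, continuous_hcomp hω n⟩).continuous
  calc 0 < P C := hP.measure_pos_of_isOpen hp hC ⟨σ, fun x _ => hσ (mem_range_self x)⟩
    _ = ∫⁻ τ, C.indicator 1 τ ∂P := (lintegral_indicator_one hC.measurableSet).symm
    _ ≤ ∫⁻ τ, μ (hcomp ω τ n ⁻¹' U) ∂P := lintegral_mono <| indicator_le fun τ hτ => by
        have hτU : hcomp ω τ n ⁻¹' U = univ := eq_univ_of_forall fun x => hτ (mem_univ x)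
        simp [hτU]
    _ = μ U := hP.lintegral_measure_preimage_hcomp hω.measurable hμ n hU.measurableSet

end Support

lemma eventually_range_hcomp_subset_ball {Λ X : Type*} [MetricSpace X] [CompactSpace X]
    {ω : Λ → X → X} {σ : ℕ → Λ} (hσ : σ ∈ Sset ω) {y : X}
    (hy : ∀ x, Tendsto (fun n => hcomp ω σ n x) atTop (𝓝 y)) {ε : ℝ} (hε : 0 < ε) :
    ∀ᶠ n in atTop, range (hcomp ω σ n) ⊆ ball y ε := by
  rcases isEmpty_or_nonempty X with hX | ⟨⟨x₀⟩⟩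
  · exact Eventually.of_forall fun n => by simp [range_eq_empty]
  filter_upwards [hσ.eventually (gt_mem_nhds (half_pos hε)),
    (hy x₀).eventually (ball_mem_nhds y (half_pos hε))] with n hdiam hx₀
  rintro _ ⟨x, rfl⟩
  calc dist (hcomp ω σ n x) y
      ≤ dist (hcomp ω σ n x) (hcomp ω σ n x₀) + dist (hcomp ω σ n x₀) y := dist_triangle _ _ _
    _ < ε / 2 + ε / 2 := add_lt_add
        ((dist_le_diam_of_mem isBounded_of_compactSpace (mem_range_self x)
          (mem_range_self x₀)).trans_lt hdiam) hx₀
    _ = ε := add_halves ε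

section Coding

variable {Λ X : Type*} [MetricSpace X] [CompactSpace X] [MeasurableSpace X] [BorelSpace X]
  {ω : Λ → X → X} {μ : Measure X} {Γ : (ℕ → Λ) → X}

theorem msupport_subset_closure_image [MeasurableSpace Λ] {p : Measure Λ} [IsProbabilityMeasure p]
    {P : Measure (ℕ → Λ)} (hP : IsBernoulli p P) (hω : Measurable fun q : Λ × X => ω q.1 q.2)
    [IsFiniteMeasure μ] (hμ : IsStationaryMeasure ω p μ)
    (hS : P (Sset ω) = 1)
    (hΓ : ∀ σ ∈ Sset ω, ∀ x, Tendsto (fun n => hcomp ω σ n x) atTop (𝓝 (Γ σ))) :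
    msupport μ ⊆ closure (Γ '' Sset ω) := by
  intro x hx
  by_contra hxΓ
  obtain ⟨ε, hε, hεΓ⟩ : ∃ ε > 0, ∀ σ ∈ Sset ω, ε ≤ dist x (Γ σ) := by
    simpa [Metric.mem_closure_iff] using hxΓ
  refine hx (ball x (ε / 2)) isOpen_ball (mem_ball_self (half_pos hε)) <|
    hP.measure_eq_zero_of_eventually_preimage_hcomp_eq_empty hω hμ hS measurableSet_ball
      fun σ hσ => ?_
  filter_upwards [eventually_range_hcomp_subset_ball hσ (hΓ σ hσ) (half_pos hε)] with n hn
  exact preimage_eq_empty ((ball_disjoint_ball (by linarith [hεΓ σ hσ])).mono_right hn)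

theorem closure_image_subset_msupport [TopologicalSpace Λ] [SecondCountableTopology Λ]
    [MeasurableSpace Λ] [OpensMeasurableSpace Λ] {p : Measure Λ} [IsProbabilityMeasure p]
    (hp : ∀ U : Set Λ, IsOpen U → U.Nonempty → 0 < p U)
    {P : Measure (ℕ → Λ)} (hP : IsBernoulli p P) (hω : Continuous fun q : Λ × X => ω q.1 q.2)
    [IsProbabilityMeasure μ] (hμ : IsStationaryMeasure ω p μ)
    (hΓ : ∀ σ ∈ Sset ω, ∀ x, Tendsto (fun n => hcomp ω σ n x) atTop (𝓝 (Γ σ))) :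
    closure (Γ '' Sset ω) ⊆ msupport μ := by
  refine closure_minimal ?_ (isClosed_msupport μ)
  rintro _ ⟨σ, hσ, rfl⟩ U hU hσU
  obtain ⟨ε, hε, hεU⟩ := Metric.isOpen_iff.1 hU _ hσU
  obtain ⟨n, hn⟩ := (eventually_range_hcomp_subset_ball hσ (hΓ σ hσ) hε).exists
  exact (hP.measure_pos_of_range_hcomp_subset hp hω hμ hU (hn.trans hεU)).ne'

end Coding

lemma transferOp_apply {X Λ : Type*}
    [MetricSpace X] [CompactSpace X] [MeasurableSpace X] [BorelSpace X]
    [MetricSpace Λ] [CompactSpace Λ] [MeasurableSpace Λ] [BorelSpace Λ]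
    (ω : Λ → X → X) (hω : Continuous fun q : Λ × X => ω q.1 q.2)
    (p : Measure Λ) [IsProbabilityMeasure p] (μ : ProbabilityMeasure X) {B : Set X}
    (hB : MeasurableSet B) :
    (transferOp ω hω p μ : Measure X) B = ∫⁻ l, (μ : Measure X) (ω l ⁻¹' B) ∂p := by
  rw [transferOp, ProbabilityMeasure.coe_mk, Measure.map_apply hω.measurable hB,
    Measure.prod_apply (hω.measurable hB)]
  rfl

lemma isStationaryMeasure_of_transferOp_eq {X Λ : Type*}
    [MetricSpace X] [CompactSpace X] [MeasurableSpace X] [BorelSpace X]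
    [MetricSpace Λ] [CompactSpace Λ] [MeasurableSpace Λ] [BorelSpace Λ]
    (ω : Λ → X → X) (hω : Continuous fun q : Λ × X => ω q.1 q.2)
    (p : Measure Λ) [IsProbabilityMeasure p] (μ : ProbabilityMeasure X)
    (hfix : transferOp ω hω p μ = μ) : IsStationaryMeasure ω p (μ : Measure X) := fun B hB => by
  rw [← transferOp_apply ω hω p μ hB, hfix]

theorem stmt13 {X Λ : Type*} [MetricSpace X] [CompactSpace X]
    [MeasurableSpace X] [BorelSpace X]
    [MetricSpace Λ] [CompactSpace Λ] [MeasurableSpace Λ] [BorelSpace Λ]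
    (ω : Λ → X → X) (hω : Continuous fun q : Λ × X => ω q.1 q.2)
    (p : Measure Λ) [IsProbabilityMeasure p]
    (hpos : ∀ U : Set Λ, IsOpen U → U.Nonempty → 0 < p U)
    (P : Measure (ℕ → Λ)) (hP : IsBernoulli p P)
    (hS : P (Sset ω) = 1)
    (μp : ProbabilityMeasure X) (hfix : transferOp ω hω p μp = μp)
    (Γ : (ℕ → Λ) → X)
    (hΓ : ∀ σ ∈ Sset ω, ∀ x : X,
      Filter.Tendsto (fun n => hcomp ω σ n x) atTop (nhds (Γ σ))) :
    msupport (μp : Measure X) = closure (Γ '' Sset ω) := by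
  have hμ := isStationaryMeasure_of_transferOp_eq ω hω p μp hfix
  exact (msupport_subset_closure_image hP hω.measurable hμ hS hΓ).antisymm
    (closure_image_subset_msupport hpos hP hω hμ hΓ)
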